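/- For every p > 0, every positive integer u, every t ≥ 0 and every H > 0, there exist constants k' > 0 and c > 0 such that for all σ ∈ (0,1): ∫_{|x| > k' |ln σ|^{1/p}} φ_{u,p}(x) |x|^t dx ≤ c σ^H. -/

import Mathlib

open MeasureTheory

/-- The kernel `ψ_{(p)}(x) = C_p exp(−|x|^p)` with `C_p = (2Γ(1+1/p))⁻¹`. -/
noncomputable def psiP (p : ℝ) (x : ℝ) : ℝ :=
  (2 * Real.Gamma (1 + 1 / p))⁻¹ * Real.exp (-|x| ^ p)

/-- `nfoldConv g n` is the `(n+1)`-fold convolution `g * g * ⋯ * g` (`n+1` factors). -/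
noncomputable def nfoldConv (g : ℝ → ℝ) : ℕ → ℝ → ℝ
  | 0 => g
  | n + 1 => fun x => ∫ y, nfoldConv g n y * g (x - y)

/-!
If `|f| ≤ K exp(−δ|x|^p)` and `|g| ≤ L exp(−δ|x|^p)`, then `|x|^p ≤ 2^p (|y|^p + |x − y|^p)` bounds
`|f(y) g(x − y)|` by `K L exp(−δ 2^{−p−1} |x|^p) exp(−(δ/2)|y|^p)`, which is integrable in `y`; so by
induction `φ_{u,p}` has a bound of the same shape. Such a bound makes the part of `∫ φ |x|^t` beyond
`R` an `O(exp(−(δ/2) R^p))`, and `R = k' |ln σ|^{1/p}` with `k'^p = 2H/δ` turns this into `O(σ^H)`.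
-/

open Real Set

theorem add_rpow_le_two_rpow_mul_add_rpow {a b p : ℝ} (ha : 0 ≤ a) (hb : 0 ≤ b) (hp : 0 ≤ p) :
    (a + b) ^ p ≤ 2 ^ p * (a ^ p + b ^ p) := by
  wlog hab : a ≤ b generalizing a b
  · simpa only [add_comm] using this hb ha (le_of_not_ge hab)
  calc (a + b) ^ p ≤ (2 * b) ^ p := by gcongr; linarith
    _ = 2 ^ p * b ^ p := mul_rpow zero_le_two hb
    _ ≤ 2 ^ p * (a ^ p + b ^ p) := by gcongr; exact le_add_of_nonneg_left (rpow_nonneg ha p)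

theorem abs_rpow_le_two_rpow_mul_add_rpow {p : ℝ} (hp : 0 ≤ p) (x y : ℝ) :
    |x| ^ p ≤ 2 ^ p * (|y| ^ p + |x - y| ^ p) :=
  calc |x| ^ p ≤ (|y| + |x - y|) ^ p := by
        gcongr; simpa using abs_add_le y (x - y)
    _ ≤ 2 ^ p * (|y| ^ p + |x - y| ^ p) :=
        add_rpow_le_two_rpow_mul_add_rpow (abs_nonneg _) (abs_nonneg _) hp

theorem integrable_abs_rpow_mul_exp_neg_mul_abs_rpow {p q b : ℝ} (hq : -1 < q) (hp : 0 < p)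
    (hb : 0 < b) : Integrable fun x : ℝ => |x| ^ q * exp (-b * |x| ^ p) := by
  have := integrable_fun_norm_addHaar (volume : Measure ℝ)
    (f := fun r : ℝ => r ^ q * exp (-b * r ^ p))
  simpa using this.2 (by simpa using integrableOn_rpow_mul_exp_neg_mul_rpow hq hp hb)

theorem integrable_exp_neg_mul_abs_rpow {p b : ℝ} (hp : 0 < p) (hb : 0 < b) :
    Integrable fun x : ℝ => exp (-b * |x| ^ p) := by
  simpa using integrable_abs_rpow_mul_exp_neg_mul_abs_rpow (q := 0) (by norm_num) hp hb

theorem exp_neg_mul_rpow_mul_exp_neg_mul_rpow_le {p δ δ₁ δ₂ : ℝ} (hp : 0 ≤ p) (hδ : 0 ≤ δ)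
    (hδ₁ : δ ≤ δ₁) (hδ₂ : δ ≤ δ₂) (x y : ℝ) :
    exp (-δ₁ * |y| ^ p) * exp (-δ₂ * |x - y| ^ p) ≤
      exp (-(δ / (2 * 2 ^ p)) * |x| ^ p) * exp (-(δ / 2) * |y| ^ p) := by
  have hy : 0 ≤ |y| ^ p := rpow_nonneg (abs_nonneg y) p
  have hxy : 0 ≤ |x - y| ^ p := rpow_nonneg (abs_nonneg _) p
  have hx : δ / (2 * 2 ^ p) * |x| ^ p ≤ δ / 2 * (|y| ^ p + |x - y| ^ p) :=
    calc δ / (2 * 2 ^ p) * |x| ^ p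
        ≤ δ / (2 * 2 ^ p) * (2 ^ p * (|y| ^ p + |x - y| ^ p)) := by
          gcongr; exact abs_rpow_le_two_rpow_mul_add_rpow hp x y
      _ = δ / 2 * (|y| ^ p + |x - y| ^ p) := by field_simp
  rw [← exp_add, ← exp_add, exp_le_exp]
  nlinarith [mul_le_mul_of_nonneg_right hδ₁ hy, mul_le_mul_of_nonneg_right hδ₂ hxy]

theorem exp_neg_mul_rpow_abs_log_eq_rpow {p δ H σ : ℝ} (hp : p ≠ 0) (hδ : 0 < δ) (hH : 0 ≤ H)
    (hσ₀ : 0 < σ) (hσ₁ : σ ≤ 1) :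
    exp (-δ * ((H / δ) ^ (1 / p) * |log σ| ^ (1 / p)) ^ p) = σ ^ H := by
  rw [← mul_rpow (by positivity) (abs_nonneg _), one_div, rpow_inv_rpow (by positivity) hp,
    abs_of_nonpos (log_nonpos hσ₀.le hσ₁), rpow_def_of_pos hσ₀]
  congr 1
  field_simp

def HasExpRpowDecay (p : ℝ) (f : ℝ → ℝ) : Prop :=
  ∃ K δ : ℝ, 0 ≤ K ∧ 0 < δ ∧ ∀ x, |f x| ≤ K * exp (-δ * |x| ^ p)

theorem hasExpRpowDecay_psiP (p : ℝ) : HasExpRpowDecay p (psiP p) :=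
  ⟨|(2 * Real.Gamma (1 + 1 / p))⁻¹|, 1, abs_nonneg _, one_pos, fun x => by
    simp [psiP, abs_mul]⟩

namespace HasExpRpowDecay

variable {p : ℝ} {f g : ℝ → ℝ}

theorem conv (hp : 0 < p) (hf : HasExpRpowDecay p f) (hg : HasExpRpowDecay p g) :
    HasExpRpowDecay p fun x => ∫ y, f y * g (x - y) := by
  obtain ⟨K₁, δ₁, hK₁, hδ₁, hf⟩ := hf
  obtain ⟨K₂, δ₂, hK₂, hδ₂, hg⟩ := hg
  set δ := min δ₁ δ₂
  have hδ : 0 < δ := lt_min hδ₁ hδ₂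
  have hint := integrable_exp_neg_mul_abs_rpow hp (half_pos hδ)
  set J := ∫ y, exp (-(δ / 2) * |y| ^ p)
  refine ⟨K₁ * K₂ * J, δ / (2 * 2 ^ p), by positivity, by positivity, fun x => ?_⟩
  have hbound (y : ℝ) : ‖f y * g (x - y)‖ ≤
      K₁ * K₂ * exp (-(δ / (2 * 2 ^ p)) * |x| ^ p) * exp (-(δ / 2) * |y| ^ p) :=
    calc ‖f y * g (x - y)‖ = |f y| * |g (x - y)| := by rw [Real.norm_eq_abs, abs_mul]
      _ ≤ K₁ * exp (-δ₁ * |y| ^ p) * (K₂ * exp (-δ₂ * |x - y| ^ p)) := by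
          gcongr
          exacts [hf y, hg (x - y)]
      _ = K₁ * K₂ * (exp (-δ₁ * |y| ^ p) * exp (-δ₂ * |x - y| ^ p)) := by ring
      _ ≤ K₁ * K₂ * (exp (-(δ / (2 * 2 ^ p)) * |x| ^ p) * exp (-(δ / 2) * |y| ^ p)) := by
          refine mul_le_mul_of_nonneg_left ?_ (by positivity)
          exact exp_neg_mul_rpow_mul_exp_neg_mul_rpow_le hp.le hδ.le (min_le_left _ _)
            (min_le_right _ _) x y
      _ = _ := by ring
  calc |∫ y, f y * g (x - y)|
      ≤ ∫ y, K₁ * K₂ * exp (-(δ / (2 * 2 ^ p)) * |x| ^ p) * exp (-(δ / 2) * |y| ^ p) :=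
        norm_integral_le_of_norm_le (hint.const_mul _) (.of_forall hbound)
    _ = K₁ * K₂ * J * exp (-(δ / (2 * 2 ^ p)) * |x| ^ p) := by rw [integral_const_mul]; ring

theorem nfoldConv (hp : 0 < p) (hg : HasExpRpowDecay p g) :
    ∀ n, HasExpRpowDecay p (_root_.nfoldConv g n)
  | 0 => hg
  | n + 1 => (nfoldConv hp hg n).conv hp hg

theorem exists_setIntegral_abs_gt_le (hp : 0 < p) (hf : HasExpRpowDecay p f) {t : ℝ}
    (ht : -1 < t) : ∃ C δ : ℝ, 0 < δ ∧ ∀ R, 0 ≤ R →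
      ∫ x in {x : ℝ | R < |x|}, f x * |x| ^ t ≤ C * exp (-δ * R ^ p) := by
  obtain ⟨K, δ, hK, hδ, hf⟩ := hf
  have hint := integrable_abs_rpow_mul_exp_neg_mul_abs_rpow ht hp (half_pos hδ)
  set J := ∫ x, |x| ^ t * exp (-(δ / 2) * |x| ^ p)
  refine ⟨K * J, δ / 2, half_pos hδ, fun R hR => ?_⟩
  have hbound : ∀ᵐ x ∂volume.restrict {x : ℝ | R < |x|}, ‖f x * |x| ^ t‖ ≤
      K * exp (-(δ / 2) * R ^ p) * (|x| ^ t * exp (-(δ / 2) * |x| ^ p)) := by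
    refine (ae_restrict_iff' (isOpen_lt continuous_const continuous_abs).measurableSet).2
      (.of_forall fun x (hx : R < |x|) => ?_)
    have hRx : R ^ p ≤ |x| ^ p := by gcongr
    have hexp : exp (-δ * |x| ^ p) ≤ exp (-(δ / 2) * R ^ p) * exp (-(δ / 2) * |x| ^ p) := by
      rw [← exp_add, exp_le_exp]
      nlinarith
    calc ‖f x * |x| ^ t‖ = |f x| * |x| ^ t := by
          rw [Real.norm_eq_abs, abs_mul, abs_of_nonneg (rpow_nonneg (abs_nonneg x) t)]
      _ ≤ K * exp (-δ * |x| ^ p) * |x| ^ t := by gcongr; exact hf x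
      _ ≤ K * (exp (-(δ / 2) * R ^ p) * exp (-(δ / 2) * |x| ^ p)) * |x| ^ t := by gcongr
      _ = _ := by ring
  calc ∫ x in {x : ℝ | R < |x|}, f x * |x| ^ t
      ≤ ‖∫ x in {x : ℝ | R < |x|}, f x * |x| ^ t‖ := le_norm_self _
    _ ≤ ∫ x in {x : ℝ | R < |x|}, K * exp (-(δ / 2) * R ^ p) *
          (|x| ^ t * exp (-(δ / 2) * |x| ^ p)) :=
        norm_integral_le_of_norm_le (hint.const_mul _).restrict hbound
    _ ≤ ∫ x, K * exp (-(δ / 2) * R ^ p) * (|x| ^ t * exp (-(δ / 2) * |x| ^ p)) :=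
        setIntegral_le_integral (hint.const_mul _) (.of_forall fun x => by positivity)
    _ = K * J * exp (-(δ / 2) * R ^ p) := by rw [integral_const_mul]; ring

theorem exists_setIntegral_abs_gt_log_le_rpow (hp : 0 < p) (hf : HasExpRpowDecay p f) {t H : ℝ}
    (ht : -1 < t) (hH : 0 < H) : ∃ k' c : ℝ, 0 < k' ∧ 0 < c ∧ ∀ σ : ℝ, 0 < σ → σ < 1 →
      ∫ x in {x : ℝ | k' * |log σ| ^ (1 / p) < |x|}, f x * |x| ^ t ≤ c * σ ^ H := by
  obtain ⟨C, δ, hδ, htail⟩ := hf.exists_setIntegral_abs_gt_le hp ht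
  refine ⟨(H / δ) ^ (1 / p), max C 1, by positivity, by positivity, fun σ hσ₀ hσ₁ => ?_⟩
  calc _ ≤ C * exp (-δ * ((H / δ) ^ (1 / p) * |log σ| ^ (1 / p)) ^ p) :=
        htail _ (by positivity)
    _ = C * σ ^ H := by rw [exp_neg_mul_rpow_abs_log_eq_rpow hp.ne' hδ hH.le hσ₀ hσ₁.le]
    _ ≤ max C 1 * σ ^ H := by gcongr; exact le_max_left C 1

end HasExpRpowDecay

theorem stmt10_general (p : ℝ) (hp : 0 < p) (u : ℕ) (t : ℝ) (ht : 0 ≤ t)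
    (H : ℝ) (hH : 0 < H) :
    ∃ k' c : ℝ, 0 < k' ∧ 0 < c ∧ ∀ σ : ℝ, 0 < σ → σ < 1 →
      (∫ x in {x : ℝ | k' * |Real.log σ| ^ (1 / p) < |x|},
        nfoldConv (psiP p) (u - 1) x * |x| ^ t) ≤ c * σ ^ H :=
  ((hasExpRpowDecay_psiP p).nfoldConv hp (u - 1)).exists_setIntegral_abs_gt_log_le_rpow hp
    (by linarith) hH

/-- Lemma 8: tail bound for the `u`-fold convolution of `ψ_{(p)}`:
for all `t ≥ 0` and `H > 0` there are `k', c > 0` with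
`∫_{|x| > k' |ln σ|^{1/p}} φ_{u,p}(x) |x|^t dx ≤ c σ^H` for all `σ ∈ (0,1)`. -/
theorem stmt10 (p : ℝ) (hp : 0 < p) (u : ℕ) (hu : 1 ≤ u) (t : ℝ) (ht : 0 ≤ t)
    (H : ℝ) (hH : 0 < H) :
    ∃ k' c : ℝ, 0 < k' ∧ 0 < c ∧ ∀ σ : ℝ, 0 < σ → σ < 1 →
      (∫ x in {x : ℝ | k' * |Real.log σ| ^ (1 / p) < |x|},
        nfoldConv (psiP p) (u - 1) x * |x| ^ t) ≤ c * σ ^ H :=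
  stmt10_general p hp u t ht H hH
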